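/- Every nonzero vector of the linear span V of {φ₁, φ₂, φ₃, φ₄} in ℂ² ⊗ ℂ² ⊗ ℂ² that is not a scalar multiple of one of φ₁, φ₂, φ₃, φ₄ is genuinely entangled: for each of the three bipartite cuts {1}|{2,3}, {2}|{1,3}, {3}|{1,2}, any vector of V that factorizes across that cut is a scalar multiple of some φ_j. -/

import Mathlib

noncomputable section

abbrev Q : Type := EuclideanSpace ℂ (Fin 2)
abbrev Q2 : Type := EuclideanSpace ℂ (Fin 2 × Fin 2)
abbrev Q3 : Type := EuclideanSpace ℂ (Fin 2 × Fin 2 × Fin 2)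

/-- standard basis vector of ℂ² -/
def ket2 (i : Fin 2) : Q := EuclideanSpace.single i 1

/-- the state |+⟩ -/
def plus : Q := (Real.sqrt 2 : ℂ)⁻¹ • (ket2 0 + ket2 1)

/-- the state |−⟩ -/
def minus : Q := (Real.sqrt 2 : ℂ)⁻¹ • (ket2 0 - ket2 1)

/-- elementary tensor of three qubit vectors, in ℂ² ⊗ ℂ² ⊗ ℂ² ≅ ℂ⁸ -/
def tp3 (u v w : Q) : Q3 := WithLp.toLp 2 (fun p : Fin 2 × Fin 2 × Fin 2 => u p.1 * v p.2.1 * w p.2.2)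

/-- a product vector in ℂ² ⊗ ℂ² ⊗ ℂ² -/
def IsProd3 (ξ : Q3) : Prop := ∃ u v w : Q, ξ = tp3 u v w

/-- the set of one-dimensional subspaces of `T` spanned by (nonzero) product vectors -/
def prodLines3 (T : Submodule ℂ Q3) : Set (Submodule ℂ Q3) :=
  {L | ∃ ξ : Q3, ξ ≠ 0 ∧ ξ ∈ T ∧ IsProd3 ξ ∧ L = Submodule.span ℂ {ξ}}

/-- a factorized vector across the bipartite cut {1} | {2,3} -/
def cut1 (u : Q) (η : Q2) : Q3 := WithLp.toLp 2 (fun p : Fin 2 × Fin 2 × Fin 2 => u p.1 * η p.2)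

/-- a factorized vector across the bipartite cut {2} | {1,3} -/
def cut2 (u : Q) (η : Q2) : Q3 := WithLp.toLp 2 (fun p : Fin 2 × Fin 2 × Fin 2 => u p.2.1 * η (p.1, p.2.2))

/-- a factorized vector across the bipartite cut {3} | {1,2} -/
def cut3 (u : Q) (η : Q2) : Q3 := WithLp.toLp 2 (fun p : Fin 2 × Fin 2 × Fin 2 => u p.2.2 * η (p.1, p.2.1))

def φ₁ : Q3 := tp3 (ket2 0) (ket2 1) plus
def φ₂ : Q3 := tp3 (ket2 1) plus (ket2 0)
def φ₃ : Q3 := tp3 plus (ket2 0) (ket2 1)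
def φ₄ : Q3 := tp3 minus minus minus

/-- the span of the three-qubit UPB of Bennett et al. -/
def V3 : Submodule ℂ Q3 := Submodule.span ℂ {φ₁, φ₂, φ₃, φ₄}

/-- the orthogonal complement of the span of the three-qubit UPB -/
def SV : Submodule ℂ Q3 := V3ᗮ

/-! The coefficients `a, b, c, d` of `ψ = a φ₁ + b φ₂ + c φ₃ + d φ₄` can be read off the eight
coordinates of `ψ`. Factorizing across `{1}|{2,3}` means that the `2 × 4` matrix `ψ (x; y z)` has
rank at most one, and its six `2 × 2` minors force every product of two distinct coefficients to
vanish, so at most one coefficient is nonzero. The cyclic permutation of the three qubits permutes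
`φ₁, φ₂, φ₃`, fixes `φ₄`, and carries the other two cuts to the first one. -/

local notation "ς" => ((Real.sqrt 2 : ℂ)⁻¹)

def upbComb (a b c d : ℂ) : Q3 := a • φ₁ + b • φ₂ + c • φ₃ + d • φ₄

lemma exists_upbComb_eq_of_mem_V3 {ψ : Q3} (h : ψ ∈ V3) :
    ∃ a b c d : ℂ, ψ = upbComb a b c d := by
  simp only [V3, Submodule.mem_span_insert, Submodule.mem_span_singleton] at h
  obtain ⟨a, _, ⟨b, _, ⟨c, _, ⟨d, rfl⟩, rfl⟩, rfl⟩, rfl⟩ := h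
  exact ⟨a, b, c, d, by simp only [upbComb]; abel⟩

def PairwiseMulZero (a b c d : ℂ) : Prop :=
  a * b = 0 ∧ a * c = 0 ∧ b * c = 0 ∧ a * d = 0 ∧ b * d = 0 ∧ c * d = 0

namespace PairwiseMulZero

/-- The six hypotheses are the `2 × 2` minors of the matrix
`!![T, C - T, A - T, A + T; B - T, C + T, B + T, -T]`. -/
lemma of_minors {A B C T : ℂ}
    (e01 : T * (C + T) = (C - T) * (B - T))
    (e02 : T * (B + T) = (A - T) * (B - T))
    (e03 : T * (-T) = (A + T) * (B - T))
    (e12 : (C - T) * (B + T) = (A - T) * (C + T))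
    (e13 : (C - T) * (-T) = (A + T) * (C + T))
    (e23 : (A - T) * (-T) = (A + T) * (B + T)) :
    PairwiseMulZero A B C T := by
  have hAT : A * T = 0 := by linear_combination (1 / 3 : ℂ) * e03 - (1 / 3 : ℂ) * e23
  have hBT : B * T = 0 := by linear_combination (1 / 3 : ℂ) * e02 - (1 / 3 : ℂ) * e03
  have hCT : C * T = 0 := by linear_combination (1 / 6 : ℂ) * (e01 + e12 - e13)
  refine ⟨?_, ?_, ?_, hAT, hBT, hCT⟩
  · linear_combination -e03 + hAT - hBT
  · linear_combination -e13 - 2 * hCT - hAT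
  · linear_combination -e01 + 2 * hCT + hBT

lemma of_mul {a b c d k l : ℂ} (hk : k ≠ 0) (hl : l ≠ 0)
    (h : PairwiseMulZero (a * k) (b * k) (c * k) (d * l)) : PairwiseMulZero a b c d := by
  simpa only [PairwiseMulZero, mul_mul_mul_comm _ k, mul_eq_zero, hk, hl, or_false] using h

lemma cycle {a b c d : ℂ} (h : PairwiseMulZero b c a d) : PairwiseMulZero a b c d := by
  obtain ⟨hbc, hba, hca, hbd, hcd, had⟩ := h
  exact ⟨by rw [mul_comm, hba], by rw [mul_comm, hca], hbc, had, hbd, hcd⟩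

lemma exists_eq_smul {a b c d : ℂ} (h : PairwiseMulZero a b c d) :
    ∃ k : ℂ, upbComb a b c d = k • φ₁ ∨ upbComb a b c d = k • φ₂ ∨
      upbComb a b c d = k • φ₃ ∨ upbComb a b c d = k • φ₄ := by
  obtain ⟨hab, hac, hbc, had, hbd, hcd⟩ := h
  simp only [mul_eq_zero] at hab hac hbc had hbd hcd
  by_cases ha : a = 0
  · by_cases hb : b = 0
    · by_cases hc : c = 0
      · exact ⟨d, .inr <| .inr <| .inr <| by simp [upbComb, ha, hb, hc]⟩
      · exact ⟨c, .inr <| .inr <| .inl <| by simp [upbComb, ha, hb, hcd.resolve_left hc]⟩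
    · exact ⟨b, .inr <| .inl <| by
        simp [upbComb, ha, hbc.resolve_left hb, hbd.resolve_left hb]⟩
  · exact ⟨a, .inl <| by
      simp [upbComb, hab.resolve_left ha, hac.resolve_left ha, had.resolve_left ha]⟩

end PairwiseMulZero

section coordinates

variable (a b c d : ℂ)

attribute [local simp] upbComb φ₁ φ₂ φ₃ φ₄ tp3 plus minus ket2 PiLp.single_apply

@[simp] lemma upbComb_apply_000 : upbComb a b c d (0, 0, 0) = d * ς ^ 3 := by
  simp [-mul_eq_mul_left_iff, -mul_eq_mul_right_iff]; ring
@[simp] lemma upbComb_apply_001 : upbComb a b c d (0, 0, 1) = c * ς - d * ς ^ 3 := by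
  simp [-mul_eq_mul_left_iff, -mul_eq_mul_right_iff]; ring
@[simp] lemma upbComb_apply_010 : upbComb a b c d (0, 1, 0) = a * ς - d * ς ^ 3 := by
  simp [-mul_eq_mul_left_iff, -mul_eq_mul_right_iff]; ring
@[simp] lemma upbComb_apply_011 : upbComb a b c d (0, 1, 1) = a * ς + d * ς ^ 3 := by
  simp [-mul_eq_mul_left_iff, -mul_eq_mul_right_iff]; ring
@[simp] lemma upbComb_apply_100 : upbComb a b c d (1, 0, 0) = b * ς - d * ς ^ 3 := by
  simp [-mul_eq_mul_left_iff, -mul_eq_mul_right_iff]; ring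
@[simp] lemma upbComb_apply_101 : upbComb a b c d (1, 0, 1) = c * ς + d * ς ^ 3 := by
  simp [-mul_eq_mul_left_iff, -mul_eq_mul_right_iff]; ring
@[simp] lemma upbComb_apply_110 : upbComb a b c d (1, 1, 0) = b * ς + d * ς ^ 3 := by
  simp [-mul_eq_mul_left_iff, -mul_eq_mul_right_iff]; ring
@[simp] lemma upbComb_apply_111 : upbComb a b c d (1, 1, 1) = -(d * ς ^ 3) := by
  simp [-mul_eq_mul_left_iff, -mul_eq_mul_right_iff]; ring

end coordinates

lemma PairwiseMulZero.of_upbComb_eq_cut1 {a b c d : ℂ} {u : Q} {η : Q2}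
    (h : upbComb a b c d = cut1 u η) : PairwiseMulZero a b c d := by
  have minor (y z y' z' : Fin 2) : upbComb a b c d (0, y, z) * upbComb a b c d (1, y', z') =
      upbComb a b c d (0, y', z') * upbComb a b c d (1, y, z) := by
    simp only [h, cut1, PiLp.toLp_apply]; ring
  have hς : ς ≠ 0 := by simp
  exact of_mul hς (pow_ne_zero 3 hς) <| of_minors (by simpa using minor 0 0 0 1)
    (by simpa using minor 0 0 1 0) (by simpa using minor 0 0 1 1) (by simpa using minor 0 1 1 0)
    (by simpa using minor 0 1 1 1) (by simpa using minor 1 0 1 1)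

def rotate : Q3 →ₗ[ℂ] Q3 where
  toFun ψ := WithLp.toLp 2 fun p => ψ (p.2.1, p.2.2, p.1)
  map_add' _ _ := rfl
  map_smul' _ _ := rfl

lemma rotate_tp3 (u v w : Q) : rotate (tp3 u v w) = tp3 w u v := by
  ext p
  exact (mul_rotate _ _ _).symm

lemma rotate_upbComb (a b c d : ℂ) : rotate (upbComb a b c d) = upbComb b c a d := by
  simp only [upbComb, map_add, map_smul, φ₁, φ₂, φ₃, φ₄, rotate_tp3]
  abel

lemma rotate_cut2 (u : Q) (η : Q2) :
    rotate (cut2 u η) = cut3 u (WithLp.toLp 2 fun q => η (q.2, q.1)) := rfl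

lemma rotate_cut3 (u : Q) (η : Q2) : rotate (cut3 u η) = cut1 u η := rfl

theorem statement5 :
    ∀ ψ ∈ V3,
      ((∃ (u : Q) (η : Q2), ψ = cut1 u η) ∨ (∃ (u : Q) (η : Q2), ψ = cut2 u η) ∨
        (∃ (u : Q) (η : Q2), ψ = cut3 u η)) →
      ∃ c : ℂ, ψ = c • φ₁ ∨ ψ = c • φ₂ ∨ ψ = c • φ₃ ∨ ψ = c • φ₄ := by
  intro ψ hψ hcut
  obtain ⟨a, b, c, d, rfl⟩ := exists_upbComb_eq_of_mem_V3 hψ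
  apply PairwiseMulZero.exists_eq_smul
  rcases hcut with ⟨u, η, h⟩ | ⟨u, η, h⟩ | ⟨u, η, h⟩
  · exact .of_upbComb_eq_cut1 h
  · have h' := congrArg (rotate ∘ rotate) h
    simp only [Function.comp_apply, rotate_upbComb, rotate_cut2, rotate_cut3] at h'
    exact (PairwiseMulZero.of_upbComb_eq_cut1 h').cycle.cycle
  · have h' := congrArg rotate h
    rw [rotate_upbComb, rotate_cut3] at h'
    exact (PairwiseMulZero.of_upbComb_eq_cut1 h').cycle
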